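/- (Recovery of the Bakry–Emery Ricci tensor from coarse Ricci curvature, weighted Euclidean case.) Let ρ : ℝⁿ → ℝ be smooth (C³), let x ∈ ℝⁿ, and let γ : ℝ → ℝⁿ be a C² curve with γ(0) = x. Then the coarse Ricci curvature Ric_{Δ_ρ}(x,y) = Γ₂(Δ_ρ, f_{x,y}, f_{x,y})(x) satisfies (1/2)·(d²/ds²)|_{s=0} Ric_{Δ_ρ}(x, γ(s)) = Hess ρ_x(γ'(0), γ'(0)), which is the Bakry–Emery Ricci tensor Ric_∞ = Ric + Hess ρ of the metric measure space (ℝⁿ, flat metric, e^{−ρ}dx) evaluated at (γ'(0), γ'(0)). -/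

import Mathlib

open scoped RealInnerProductSpace

/-- The Euclidean Laplacian: the trace of the Hessian, i.e. the sum of pure second
partial derivatives. -/
noncomputable def eLap {n : ℕ} (f : EuclideanSpace ℝ (Fin n) → ℝ)
    (x : EuclideanSpace ℝ (Fin n)) : ℝ :=
  ∑ i, fderiv ℝ (fun y => fderiv ℝ f y (EuclideanSpace.single i 1)) x (EuclideanSpace.single i 1)

/-- The carré du champ of an operator `L`: `Γ(L,u,v) = (1/2)(L(uv) − (Lu)v − u(Lv))`. -/
noncomputable def carre {n : ℕ}
    (L : (EuclideanSpace ℝ (Fin n) → ℝ) → EuclideanSpace ℝ (Fin n) → ℝ)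
    (u v : EuclideanSpace ℝ (Fin n) → ℝ) (z : EuclideanSpace ℝ (Fin n)) : ℝ :=
  (1/2) * (L (fun w => u w * v w) z - L u z * v z - u z * L v z)

/-- The iterated carré du champ (diagonal):
`Γ₂(L,f,f) = (1/2)(L(Γ(L,f,f)) − 2Γ(L,Lf,f))`. -/
noncomputable def gamma2 {n : ℕ}
    (L : (EuclideanSpace ℝ (Fin n) → ℝ) → EuclideanSpace ℝ (Fin n) → ℝ)
    (f : EuclideanSpace ℝ (Fin n) → ℝ) (z : EuclideanSpace ℝ (Fin n)) : ℝ :=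
  (1/2) * (L (carre L f f) z - 2 * carre L (L f) f z)

/-- The weighted Laplacian `Δ_ρ f = Δf − ⟨∇ρ, ∇f⟩`. -/
noncomputable def wLap {n : ℕ} (ρ f : EuclideanSpace ℝ (Fin n) → ℝ)
    (z : EuclideanSpace ℝ (Fin n)) : ℝ :=
  eLap f z - ⟪gradient ρ z, gradient f z⟫

/-- The Hessian matrix of second partial derivatives. -/
noncomputable def hess {n : ℕ} (f : EuclideanSpace ℝ (Fin n) → ℝ)
    (z : EuclideanSpace ℝ (Fin n)) (i j : Fin n) : ℝ :=
  fderiv ℝ (fun y => fderiv ℝ f y (EuclideanSpace.single j 1)) z (EuclideanSpace.single i 1)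

/-- The test function `f_{x,y}(z) = (1/2)(d²(x,y) − d²(y,z) + d²(z,x))`. -/
noncomputable def testFn {n : ℕ} (x y z : EuclideanSpace ℝ (Fin n)) : ℝ :=
  (1/2) * (dist x y ^ 2 - dist y z ^ 2 + dist z x ^ 2)

/-- The coarse Ricci curvature of an operator `L`:
`Ric_L(x,y) = Γ₂(L, f_{x,y}, f_{x,y})(x)`. -/
noncomputable def cRic {n : ℕ}
    (L : (EuclideanSpace ℝ (Fin n) → ℝ) → EuclideanSpace ℝ (Fin n) → ℝ)
    (x y : EuclideanSpace ℝ (Fin n)) : ℝ :=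
  gamma2 L (testFn x y) x

/-!
The test function `f_{x,y}` is affine with gradient `y - x`, and the carré du champ of the
weighted Laplacian is `Γ(u, w) = ⟪∇u, ∇w⟫`. Hence `Γ(f, f)` is constant, `Δ_ρ f = -∂_{y-x} ρ`,
and `Γ₂(Δ_ρ, f, f)(x) = ∂_{y-x} ∂_{y-x} ρ (x)`: the coarse Ricci curvature is the quadratic form
`Hess ρ_x (y - x, y - x)`. Differentiating it twice along `γ`, every term containing
`γ 0 - x = 0` vanishes, leaving `2 Hess ρ_x (γ' 0, γ' 0)`.
-/

section Calculus

variable {𝕜 E F G : Type*} [NontriviallyNormedField 𝕜] [NormedAddCommGroup E] [NormedSpace 𝕜 E]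
  [NormedAddCommGroup F] [NormedSpace 𝕜 F] [NormedAddCommGroup G] [NormedSpace 𝕜 G]

theorem ContinuousLinearMap.deriv_deriv_of_bilinear (B : E →L[𝕜] F →L[𝕜] G) {u : 𝕜 → E}
    {v : 𝕜 → F} {t : 𝕜} (hu : Differentiable 𝕜 u) (hv : Differentiable 𝕜 v)
    (hu' : DifferentiableAt 𝕜 (deriv u) t) (hv' : DifferentiableAt 𝕜 (deriv v) t) :
    deriv (deriv fun s => B (u s) (v s)) t
      = B (u t) (deriv (deriv v) t) + (2 : 𝕜) • B (deriv u t) (deriv v t)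
        + B (deriv (deriv u) t) (v t) := by
  have hfirst : deriv (fun s => B (u s) (v s))
      = fun s => B (u s) (deriv v s) + B (deriv u s) (v s) :=
    funext fun s => B.deriv_of_bilinear (fun _ => hu s) (fun _ => hv s)
  have hsecond :=
    (B.hasDerivAt_of_bilinear (fun _ => (hu t).hasDerivAt) (fun _ => hv'.hasDerivAt)).fun_add
      (B.hasDerivAt_of_bilinear (fun _ => hu'.hasDerivAt) (fun _ => (hv t).hasDerivAt))
  rw [hfirst, hsecond.deriv, two_smul]
  abel

theorem ContDiff.differentiable_fderiv_apply {f : E → F} (hf : ContDiff 𝕜 2 f) (e : E) :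
    Differentiable 𝕜 (fun y => fderiv 𝕜 f y e) :=
  ((hf.fderiv_right (m := 1) (by norm_num)).clm_apply contDiff_const).differentiable
    (by norm_num)

theorem fderiv_fderiv_mul_apply {u w : E → 𝕜} (hu : ContDiff 𝕜 2 u) (hw : ContDiff 𝕜 2 w)
    (z e : E) :
    fderiv 𝕜 (fun y => fderiv 𝕜 (fun y => u y * w y) y e) z e
      = u z * fderiv 𝕜 (fun y => fderiv 𝕜 w y e) z e
        + w z * fderiv 𝕜 (fun y => fderiv 𝕜 u y e) z e
        + 2 * (fderiv 𝕜 u z e * fderiv 𝕜 w z e) := by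
  have hu1 := hu.differentiable (by norm_num)
  have hw1 := hw.differentiable (by norm_num)
  have hfirst : (fun y => fderiv 𝕜 (fun y => u y * w y) y e)
      = fun y => u y * fderiv 𝕜 w y e + w y * fderiv 𝕜 u y e := by
    funext y
    simp [fderiv_fun_mul (hu1 y) (hw1 y)]
  have hsecond :=
    ((hu1 z).hasFDerivAt.fun_mul (hw.differentiable_fderiv_apply e z).hasFDerivAt).fun_add
      ((hw1 z).hasFDerivAt.fun_mul (hu.differentiable_fderiv_apply e z).hasFDerivAt)
  rw [hfirst, hsecond.fderiv]
  simp only [add_apply, smul_apply, smul_eq_mul]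
  ring

end Calculus

section Euclidean

variable {n : ℕ}

local notation "E" => EuclideanSpace ℝ (Fin n)

theorem ContinuousLinearMap.apply_eq_sum_single {F : Type*} [AddCommGroup F] [Module ℝ F]
    [TopologicalSpace F] (L : E →L[ℝ] F) (v : E) :
    L v = ∑ i, v i • L (EuclideanSpace.single i 1) := by
  conv_lhs => rw [← (EuclideanSpace.basisFun (Fin n) ℝ).sum_repr v]
  simp [EuclideanSpace.basisFun_apply]

theorem sum_fderiv_single_mul_fderiv_single (u w : E → ℝ) (z : E) :
    ∑ i, fderiv ℝ u z (EuclideanSpace.single i 1) * fderiv ℝ w z (EuclideanSpace.single i 1)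
      = ⟪gradient u z, gradient w z⟫ := by
  simp_rw [← inner_gradient_left (f := u), ← inner_gradient_left (f := w)]
  simpa only [EuclideanSpace.basisFun_apply, real_inner_comm (gradient w z)] using
    (EuclideanSpace.basisFun (Fin n) ℝ).sum_inner_mul_inner (gradient u z) (gradient w z)

theorem hess_eq_fderiv_fderiv {f : E → ℝ} {z : E} (hf : DifferentiableAt ℝ (fderiv ℝ f) z)
    (i j : Fin n) :
    hess f z i j
      = fderiv ℝ (fderiv ℝ f) z (EuclideanSpace.single i 1) (EuclideanSpace.single j 1) := by
  rw [hess, fderiv_clm_apply hf (differentiableAt_const _)]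
  simp

theorem sum_hess_mul_mul {f : E → ℝ} {z : E} (hf : DifferentiableAt ℝ (fderiv ℝ f) z)
    (v w : E) : ∑ i, ∑ j, hess f z i j * v i * w j = fderiv ℝ (fderiv ℝ f) z v w := by
  rw [ContinuousLinearMap.apply_eq_sum_single _ v, sum_apply]
  refine Finset.sum_congr rfl fun i _ => ?_
  rw [smul_apply, ContinuousLinearMap.apply_eq_sum_single _ w, Finset.smul_sum]
  refine Finset.sum_congr rfl fun j _ => ?_
  rw [hess_eq_fderiv_fderiv hf, smul_eq_mul]
  ring

theorem eLap_mul {u w : E → ℝ} (hu : ContDiff ℝ 2 u) (hw : ContDiff ℝ 2 w) (z : E) :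
    eLap (fun y => u y * w y) z
      = u z * eLap w z + w z * eLap u z + 2 * ⟪gradient u z, gradient w z⟫ := by
  simp only [eLap, fderiv_fderiv_mul_apply hu hw, Finset.sum_add_distrib, ← Finset.mul_sum,
    sum_fderiv_single_mul_fderiv_single]

theorem wLap_eq_eLap_sub_fderiv (ρ f : E → ℝ) (z : E) :
    wLap ρ f z = eLap f z - fderiv ℝ f z (gradient ρ z) := by
  simp [wLap, inner_gradient_right]

theorem wLap_mul (ρ : E → ℝ) {u w : E → ℝ} (hu : ContDiff ℝ 2 u) (hw : ContDiff ℝ 2 w) (z : E) :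
    wLap ρ (fun y => u y * w y) z
      = u z * wLap ρ w z + w z * wLap ρ u z + 2 * ⟪gradient u z, gradient w z⟫ := by
  simp only [wLap_eq_eLap_sub_fderiv, eLap_mul hu hw,
    fderiv_fun_mul (hu.differentiable (by norm_num) z) (hw.differentiable (by norm_num) z)]
  simp only [inner_gradient_right, Real.ringHom_apply, add_apply, smul_apply, smul_eq_mul]
  ring

theorem carre_wLap (ρ : E → ℝ) {u w : E → ℝ} (hu : ContDiff ℝ 2 u) (hw : ContDiff ℝ 2 w)
    (z : E) : carre (wLap ρ) u w z = ⟪gradient u z, gradient w z⟫ := by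
  rw [carre, wLap_mul ρ hu hw]
  ring

theorem wLap_const (ρ : E → ℝ) (k : ℝ) (z : E) : wLap ρ (fun _ => k) z = 0 := by
  simp [wLap, eLap]

theorem fderiv_inner_add_const (v : E) (c : ℝ) (z : E) :
    fderiv ℝ (fun y => ⟪v, y⟫ + c) z = innerSL ℝ v :=
  ((innerSL ℝ v).hasFDerivAt.add_const c).fderiv

theorem gradient_inner_add_const (v : E) (c : ℝ) (z : E) :
    gradient (fun y => ⟪v, y⟫ + c) z = v := by
  rw [gradient, fderiv_inner_add_const, LinearIsometryEquiv.symm_apply_eq]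
  ext
  simp

theorem eLap_inner_add_const (v : E) (c : ℝ) (z : E) : eLap (fun y => ⟪v, y⟫ + c) z = 0 := by
  simp only [eLap, fderiv_inner_add_const]
  simp

theorem wLap_inner_add_const (ρ : E → ℝ) (v : E) (c : ℝ) (z : E) :
    wLap ρ (fun y => ⟪v, y⟫ + c) z = -fderiv ℝ ρ z v := by
  rw [wLap, eLap_inner_add_const, gradient_inner_add_const, inner_gradient_left, zero_sub]

theorem testFn_eq_inner_add_const (x y : E) :
    testFn x y = fun z => ⟪y - x, z⟫ + ⟪x, x - y⟫ := by
  funext z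
  simp only [testFn, dist_eq_norm, ← real_inner_self_eq_norm_sq, inner_sub_left, inner_sub_right,
    real_inner_comm x y, real_inner_comm x z, real_inner_comm y z]
  ring

theorem cRic_wLap_eq {ρ : E → ℝ} (hρ : ContDiff ℝ 3 ρ) (x y : E) :
    cRic (wLap ρ) x y = fderiv ℝ (fderiv ℝ ρ) x (y - x) (y - x) := by
  have hf := testFn_eq_inner_add_const x y
  have hfC : ContDiff ℝ 2 (testFn x y) :=
    hf ▸ (contDiff_const.inner ℝ contDiff_id).add contDiff_const
  have hLf : wLap ρ (testFn x y) = fun z => -fderiv ℝ ρ z (y - x) :=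
    funext fun z => hf ▸ wLap_inner_add_const ρ _ _ z
  have hD : ContDiff ℝ 2 (fderiv ℝ ρ) := hρ.fderiv_right (m := 2) (by norm_num)
  have hLfC : ContDiff ℝ 2 (wLap ρ (testFn x y)) := hLf ▸ (hD.clm_apply contDiff_const).neg
  have hΓ : carre (wLap ρ) (testFn x y) (testFn x y) = fun _ => ⟪y - x, y - x⟫ :=
    funext fun z => by rw [carre_wLap ρ hfC hfC, hf, gradient_inner_add_const]
  rw [cRic, gamma2, hΓ, wLap_const, carre_wLap ρ hLfC hfC, inner_gradient_left, hLf, hf,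
    gradient_inner_add_const, fderiv_fun_neg,
    fderiv_clm_apply (hD.differentiable (by norm_num) x) (differentiableAt_const _)]
  simp only [fderiv_fun_const, Pi.zero_apply, ContinuousLinearMap.comp_zero, zero_add,
    neg_apply, ContinuousLinearMap.flip_apply]
  ring

end Euclidean

/-- **recovery of the Bakry–Emery Ricci tensor.** For a C³ weight `ρ`,
a point `x`, and a C² curve `γ` with `γ(0) = x`, the coarse Ricci curvature of the
weighted Laplacian satisfies
`(1/2)·(d²/ds²)|₀ Ric_{Δ_ρ}(x, γ(s)) = Hess ρ_x(γ'(0), γ'(0))`,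
the Bakry–Emery Ricci tensor `Ric_∞ = Ric + Hess ρ` of flat `ℝⁿ` with measure
`e^{−ρ}dx` evaluated at `(γ'(0), γ'(0))`. -/
theorem bakry_emery_ricci_recovered_from_coarse_ricci
    {n : ℕ} (ρ : EuclideanSpace ℝ (Fin n) → ℝ) (hρ : ContDiff ℝ 3 ρ)
    (x : EuclideanSpace ℝ (Fin n)) (γ : ℝ → EuclideanSpace ℝ (Fin n))
    (hγ : ContDiff ℝ 2 γ) (h0 : γ 0 = x) :
    (1/2 : ℝ) * deriv (deriv (fun s => cRic (wLap ρ) x (γ s))) 0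
      = ∑ i, ∑ j, hess ρ x i j * deriv γ 0 i * deriv γ 0 j := by
  have hD : Differentiable ℝ (fderiv ℝ ρ) :=
    (hρ.fderiv_right (m := 2) (by norm_num)).differentiable (by norm_num)
  obtain ⟨hγ1, -, hγ'⟩ := (contDiff_succ_iff_deriv (n := 1)).mp hγ
  have hc : Differentiable ℝ (fun s => γ s - x) := hγ1.sub_const x
  have hc' : Differentiable ℝ (deriv fun s => γ s - x) := by
    rw [deriv_sub_const_fun]
    exact hγ'.differentiable one_ne_zero
  simp_rw [cRic_wLap_eq hρ x]
  rw [ContinuousLinearMap.deriv_deriv_of_bilinear _ hc hc (hc' 0) (hc' 0), sum_hess_mul_mul (hD x),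
    deriv_sub_const_fun, h0, sub_self, map_zero, zero_apply, map_zero, zero_add, add_zero,
    smul_eq_mul]
  ring
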